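/- Let A be a timed automaton and ≼ a preorder on valuations whose lift to configurations is a time-abstract simulation for A, with associated abstraction a and abstract transition relation ⇒_a. Then for every state q, A has a run reaching state q if and only if there is an abstract run (q0, a(Z0)) ⇒_a (q1, W1) ⇒_a … ⇒_a (q, W) with W ≠ ∅ (taking the empty sequence of transitions when q = q0). -/

import Mathlib

/-! Common framework: clocks, valuations, guards, zones, timed automata,
LU-bounds and LU-abstraction, following the paper's definitions. -/

abbrev Val (X : Type*) := X → NNReal

/-- Time delay: `v + δ`. -/
def delay {X : Type*} (v : Val X) (δ : NNReal) : Val X := fun x => v x + δ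

open Classical in
/-- Reset `[R]v`. -/
noncomputable def resetV {X : Type*} (R : Set X) (v : Val X) : Val X :=
  fun x => if x ∈ R then 0 else v x

/-- The valuation `0̄`. -/
def zeroVal (X : Type*) : Val X := fun _ => 0

/-- Comparison operators for atomic clock constraints. -/
inductive Cmp where
  | lt | le | eq | ge | gt

/-- Satisfaction of `a # c`. -/
def Cmp.sat : Cmp → NNReal → ℕ → Prop
  | .lt, a, c => a < (c : NNReal)
  | .le, a, c => a ≤ (c : NNReal)
  | .eq, a, c => a = (c : NNReal)
  | .ge, a, c => (c : NNReal) ≤ a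
  | .gt, a, c => (c : NNReal) < a

/-- An atomic clock constraint `x # c`. -/
structure Atomic (X : Type*) where
  clock : X
  cmp : Cmp
  bound : ℕ

/-- A guard is a finite conjunction of atomic constraints. -/
abbrev Guard (X : Type*) := List (Atomic X)

/-- `v ⊨ g`. -/
def satG {X : Type*} (v : Val X) (g : Guard X) : Prop :=
  ∀ a ∈ g, a.cmp.sat (v a.clock) a.bound

/-- Lower-bound constraints: `x > c` or `x ≥ c`. -/
def Atomic.isLower {X : Type*} (a : Atomic X) : Prop := a.cmp = Cmp.gt ∨ a.cmp = Cmp.ge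

/-- Upper-bound constraints: `x < c` or `x ≤ c`. -/
def Atomic.isUpper {X : Type*} (a : Atomic X) : Prop := a.cmp = Cmp.lt ∨ a.cmp = Cmp.le

/-- A set `W` of valuations is time-elapsed. -/
def TimeElapsed {X : Type*} (W : Set (Val X)) : Prop :=
  ∀ v ∈ W, ∀ δ : NNReal, delay v δ ∈ W

/-- `Post_{g,R}(W) = { [R]v + δ | v ∈ W, v ⊨ g, δ ∈ ℝ≥0 }`. -/
def post {X : Type*} (g : Guard X) (R : Set X) (W : Set (Val X)) : Set (Val X) :=
  { w | ∃ v ∈ W, satG v g ∧ ∃ δ : NNReal, w = delay (resetV R v) δ }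

/-- LU-bounds take values in `ℕ ∪ {−∞}`. -/
abbrev Bnd := WithBot ℕ

/-- `b < r` where `b ∈ ℕ ∪ {−∞}` and `r ∈ ℝ≥0` (every real is greater than `−∞`). -/
def Bnd.ltVal (b : Bnd) (r : NNReal) : Prop :=
  ∀ n : ℕ, b = (n : Bnd) → (n : NNReal) < r

/-- The LU-preorder `v ⊑_LU v'`. -/
def luLe {X : Type*} (L U : X → Bnd) (v v' : Val X) : Prop :=
  ∀ x, (v' x < v x → Bnd.ltVal (L x) (v' x)) ∧ (v x < v' x → Bnd.ltVal (U x) (v x))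

/-- `a_LU(W)`. -/
def aLU {X : Type*} (L U : X → Bnd) (W : Set (Val X)) : Set (Val X) :=
  { v | ∃ v' ∈ W, luLe L U v v' }

/-- A timed automaton `(Q, q0, X, T, Acc)` (finiteness of `Q`, `X`, `trans`
is imposed as hypotheses of the theorems). -/
structure TA (Q X : Type*) where
  q0 : Q
  trans : Set (Q × Guard X × Set X × Q)
  acc : Set Q

/-- One delay or action transition between configurations. -/
def step {Q X : Type*} (A : TA Q X) (c c' : Q × Val X) : Prop :=
  (c'.1 = c.1 ∧ ∃ δ : NNReal, c'.2 = delay c.2 δ) ∨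
  (∃ g R, (c.1, g, R, c'.1) ∈ A.trans ∧ satG c.2 g ∧ c'.2 = resetV R c.2)

/-- There is a run (finite alternating sequence of delay and action transitions)
from `c` to `c'`. -/
def Reach {Q X : Type*} (A : TA Q X) : (Q × Val X) → (Q × Val X) → Prop :=
  Relation.ReflTransGen (step A)

/-- Symbolic transition `(q,W) ⇒^t (q', Post_t(W))`, union over all `t ∈ T`. -/
def symbStep {Q X : Type*} (A : TA Q X) (p p' : Q × Set (Val X)) : Prop :=
  ∃ g R, (p.1, g, R, p'.1) ∈ A.trans ∧ p'.2 = post g R p.2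

/-- The initial zone `Z0 = { 0̄ + δ | δ ∈ ℝ≥0 }`. -/
def Z0 (X : Type*) : Set (Val X) := { v | ∃ δ : NNReal, v = delay (zeroVal X) δ }

/-- Time-abstract simulation for `A`. -/
def IsTASim {Q X : Type*} (A : TA Q X) (S : (Q × Val X) → (Q × Val X) → Prop) : Prop :=
  (∀ c c', S c c' → c.1 = c'.1) ∧
  (∀ (q : Q) (v v' : Val X) (δ : NNReal) (g : Guard X) (R : Set X) (q1 : Q),
    S (q, v) (q, v') → (q, g, R, q1) ∈ A.trans → satG (delay v δ) g →
    ∃ δ' : NNReal, satG (delay v' δ') g ∧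
      S (q1, resetV R (delay v δ)) (q1, resetV R (delay v' δ')))

/-- Abstraction induced by a preorder `≼` on valuations. -/
def aAbs {X : Type*} (pre : Val X → Val X → Prop) (W : Set (Val X)) : Set (Val X) :=
  { v | ∃ v' ∈ W, pre v v' }

/-- Abstract transition `(q,W) ⇒_a (q', a(W'))` whenever `W = a(W)` and `(q,W) ⇒ (q',W')`. -/
def absStep {Q X : Type*} (A : TA Q X) (pre : Val X → Val X → Prop)
    (p p' : Q × Set (Val X)) : Prop :=
  p.2 = aAbs pre p.2 ∧ ∃ W', symbStep A p (p'.1, W') ∧ p'.2 = aAbs pre W'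

/-!
Both directions are inductions along runs. Forward, every run of `A` is covered by the
symbolic run along the same transitions: a configuration `(q, v)` lies in a time-elapsed
zone `W` whose abstraction `a(W)` is reached by an abstract run. Backward, the simulation
shows that every valuation in an abstract node `(q, W)` is dominated, up to a delay, by a
valuation that itself is dominated by a reachable one, i.e. `W ⊆ a(↑a(Reach_q))`, where
`↑` closes under delays; the delay in between is unavoidable because the simulation is
time-abstract, so `v ≼ v'` need not give `v + δ ≼ v' + δ`. Hence a nonempty node yields a
reachable configuration.
-/

lemma delay_zero {X : Type*} (v : Val X) : delay v 0 = v :=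
  funext fun _ => add_zero _

lemma delay_delay {X : Type*} (v : Val X) (a b : NNReal) :
    delay (delay v a) b = delay v (a + b) :=
  funext fun _ => add_assoc _ _ _

lemma timeElapsed_Z0 (X : Type*) : TimeElapsed (Z0 X) := by
  rintro _ ⟨δ, rfl⟩ δ'
  exact ⟨δ + δ', delay_delay _ _ _⟩

lemma timeElapsed_post {X : Type*} (g : Guard X) (R : Set X) (W : Set (Val X)) :
    TimeElapsed (post g R W) := by
  rintro _ ⟨u, hu, hgu, δ, rfl⟩ δ'
  exact ⟨u, hu, hgu, δ + δ', delay_delay _ _ _⟩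

section Abstraction

variable {X : Type*} {pre : Val X → Val X → Prop}

lemma subset_aAbs (hrefl : ∀ v, pre v v) (W : Set (Val X)) : W ⊆ aAbs pre W :=
  fun v hv => ⟨v, hv, hrefl v⟩

lemma aAbs_aAbs (hrefl : ∀ v, pre v v) (htrans : ∀ u v w, pre u v → pre v w → pre u w)
    (W : Set (Val X)) : aAbs pre (aAbs pre W) = aAbs pre W := by
  refine (Set.Subset.antisymm ?_ (subset_aAbs hrefl _))
  rintro v ⟨u, ⟨w, hw, huw⟩, hvu⟩
  exact ⟨w, hw, htrans _ _ _ hvu huw⟩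

end Abstraction

def elapse {X : Type*} (W : Set (Val X)) : Set (Val X) :=
  { v | ∃ u ∈ W, ∃ δ : NNReal, v = delay u δ }

lemma Reach.delay_action {Q X : Type*} {A : TA Q X} {c : Q × Val X} {q q1 : Q} {w : Val X}
    {g : Guard X} {R : Set X} (h : Reach A c (q, w)) (ht : (q, g, R, q1) ∈ A.trans)
    {δ : NNReal} (hg : satG (delay w δ) g) : Reach A c (q1, resetV R (delay w δ)) :=
  (h.tail (Or.inl ⟨rfl, δ, rfl⟩ : step A (q, w) (q, delay w δ))).tail
    (Or.inr ⟨g, R, ht, hg, rfl⟩)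

namespace TA

variable {Q X : Type*} (A : TA Q X)

def reachableVals (q : Q) : Set (Val X) := { w | Reach A (A.q0, zeroVal X) (q, w) }

variable {A} {pre : Val X → Val X → Prop}

lemma exists_absRun_of_reach (hrefl : ∀ v, pre v v)
    (htrans : ∀ u v w, pre u v → pre v w → pre u w) {c : Q × Val X}
    (h : Reach A (A.q0, zeroVal X) c) :
    ∃ W : Set (Val X), c.2 ∈ W ∧ TimeElapsed W ∧
      Relation.ReflTransGen (absStep A pre) (A.q0, aAbs pre (Z0 X)) (c.1, aAbs pre W) := by
  induction h with
  | refl => exact ⟨Z0 X, ⟨0, (delay_zero _).symm⟩, timeElapsed_Z0 X, .refl⟩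
  | @tail b c _ hbc ih =>
    obtain ⟨W, hbW, hW, hrun⟩ := ih
    rcases hbc with ⟨hq, δ, hd⟩ | ⟨g, R, ht, hg, hreset⟩
    · exact ⟨W, hd ▸ hW _ hbW δ, hW, hq ▸ hrun⟩
    · refine ⟨post g R (aAbs pre W), ?_, timeElapsed_post g R _, hrun.tail ?_⟩
      · exact ⟨b.2, subset_aAbs hrefl W hbW, hg, 0, by rw [hreset, delay_zero]⟩
      · exact ⟨(aAbs_aAbs hrefl htrans W).symm, _, ⟨g, R, ht, rfl⟩, rfl⟩

section Simulation

variable (hsim : IsTASim A (fun c c' => c.1 = c'.1 ∧ pre c.2 c'.2))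
include hsim

lemma resetV_delay_mem_aAbs_reachableVals {q q1 : Q} {g : Guard X} {R : Set X}
    (ht : (q, g, R, q1) ∈ A.trans) {u : Val X} (hu : u ∈ aAbs pre (A.reachableVals q))
    {δ : NNReal} (hg : satG (delay u δ) g) :
    resetV R (delay u δ) ∈ aAbs pre (A.reachableVals q1) := by
  obtain ⟨w, hw, huw⟩ := hu
  obtain ⟨δ', hg', -, hpre⟩ := hsim.2 q u w δ g R q1 ⟨rfl, huw⟩ ht hg
  exact ⟨_, Reach.delay_action hw ht hg', hpre⟩

lemma resetV_mem_aAbs_reachableVals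
    (htrans : ∀ u v w, pre u v → pre v w → pre u w) {q q1 : Q} {g : Guard X} {R : Set X}
    (ht : (q, g, R, q1) ∈ A.trans) {v : Val X}
    (hv : v ∈ aAbs pre (elapse (aAbs pre (A.reachableVals q)))) (hg : satG v g) :
    resetV R v ∈ aAbs pre (A.reachableVals q1) := by
  obtain ⟨_, ⟨u, hu, δ, rfl⟩, hvu⟩ := hv
  obtain ⟨δ', hg', -, hpre⟩ :=
    hsim.2 q v (delay u δ) 0 g R q1 ⟨rfl, hvu⟩ ht (by rwa [delay_zero])
  rw [delay_delay] at hg' hpre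
  rw [delay_zero] at hpre
  obtain ⟨w, hw, hpre'⟩ := resetV_delay_mem_aAbs_reachableVals hsim ht hu hg'
  exact ⟨w, hw, htrans _ _ _ hpre hpre'⟩

lemma subset_aAbs_elapse_of_absRun (hrefl : ∀ v, pre v v) (htrans : ∀ u v w, pre u v → pre v w → pre u w)
    {p : Q × Set (Val X)}
    (hp : Relation.ReflTransGen (absStep A pre) (A.q0, aAbs pre (Z0 X)) p) :
    p.2 ⊆ aAbs pre (elapse (aAbs pre (A.reachableVals p.1))) := by
  induction hp with
  | refl =>
    rintro v ⟨_, ⟨δ, rfl⟩, hv⟩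
    exact ⟨_, ⟨zeroVal X, subset_aAbs hrefl _ .refl, δ, rfl⟩, hv⟩
  | @tail b c _ hbc ih =>
    obtain ⟨-, W', ⟨g, R, ht, hW'⟩, hc⟩ := hbc
    rintro v hv
    rw [hc, show W' = post g R b.2 from hW'] at hv
    obtain ⟨_, ⟨u, hu, hgu, δ, rfl⟩, hvu⟩ := hv
    exact ⟨_, ⟨_, resetV_mem_aAbs_reachableVals hsim htrans ht (ih hu) hgu, δ, rfl⟩, hvu⟩

end Simulation

end TA

theorem stmt_3_general {Q X : Type*} (A : TA Q X)
    (pre : Val X → Val X → Prop)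
    (hrefl : ∀ v, pre v v) (htrans : ∀ u v w, pre u v → pre v w → pre u w)
    (hsim : IsTASim A (fun c c' => c.1 = c'.1 ∧ pre c.2 c'.2)) (q : Q) :
    (∃ v : Val X, Reach A (A.q0, zeroVal X) (q, v)) ↔
    (∃ W : Set (Val X),
      Relation.ReflTransGen (absStep A pre) (A.q0, aAbs pre (Z0 X)) (q, W) ∧
      W ≠ (∅ : Set (Val X))) := by
  constructor
  · rintro ⟨v, hv⟩
    obtain ⟨W, hvW, -, hrun⟩ := TA.exists_absRun_of_reach hrefl htrans hv
    exact ⟨_, hrun, Set.Nonempty.ne_empty ⟨v, subset_aAbs hrefl W hvW⟩⟩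
  · rintro ⟨W, hrun, hW⟩
    obtain ⟨v, hv⟩ := Set.nonempty_iff_ne_empty.mpr hW
    obtain ⟨_, ⟨_, ⟨w, hw, -⟩, -⟩, -⟩ := TA.subset_aAbs_elapse_of_absRun hsim hrefl htrans hrun hv
    exact ⟨w, hw⟩

/-- for a preorder `≼` on valuations whose lift is a time-abstract
simulation for `A`, `A` has a run reaching `q` iff there is an abstract run from
`(q0, a(Z0))` to `(q, W)` with `W ≠ ∅`. -/
theorem stmt_3 {Q X : Type*} [Finite Q] [Finite X] (A : TA Q X) (hT : A.trans.Finite)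
    (pre : Val X → Val X → Prop)
    (hrefl : ∀ v, pre v v) (htrans : ∀ u v w, pre u v → pre v w → pre u w)
    (hsim : IsTASim A (fun c c' => c.1 = c'.1 ∧ pre c.2 c'.2)) (q : Q) :
    (∃ v : Val X, Reach A (A.q0, zeroVal X) (q, v)) ↔
    (∃ W : Set (Val X),
      Relation.ReflTransGen (absStep A pre) (A.q0, aAbs pre (Z0 X)) (q, W) ∧
      W ≠ (∅ : Set (Val X))) :=
  stmt_3_general A pre hrefl htrans hsim q
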